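/- arXiv:2508.09647 — 8 statements merged into one kernel-verified Lean document; each statement's English description precedes it below -/
import Mathlib

section
/- Let n ≥ 2 and let a₁ ≥ a₂ ≥ ⋯ ≥ aₙ be positive integers satisfying ∏_{i=1}^n aᵢ = ∑_{i=1}^n aᵢ. Then for every k with 1 ≤ k ≤ n, the partial product is bounded by the partial sum plus the number of remaining terms: ∏_{i=1}^k aᵢ ≤ ∑_{i=1}^k aᵢ + (n − k). -/
/-!
Removing one factor `c ≥ 1` from a product that is at most the sum plus `m` leaves a product
that is at most the remaining sum plus `m + 1`: from `c * P ≤ c + S + m` we get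
`c * P ≤ c * (S + m + 1)`. Peeling off `a n, a (n - 1), …, a (k + 1)` from `∏ = ∑` one at a
time gives the bound.
-/

open Finset

theorem Nat.le_add_succ_of_mul_le_add {c P S m : ℕ} (hc : 0 < c) (h : c * P ≤ c + S + m) :
    P ≤ S + (m + 1) := by
  refine Nat.le_of_mul_le_mul_left ?_ hc
  calc c * P ≤ c + S + m := h
    _ ≤ c * (S + (m + 1)) := by nlinarith

theorem Finset.prod_le_sum_add_card_of_prod_union_le {ι : Type*} [DecidableEq ι] {a : ι → ℕ}
    {r : ℕ} (s d : Finset ι) (hsd : Disjoint s d) (hpos : ∀ i ∈ d, 0 < a i)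
    (h : ∏ i ∈ s ∪ d, a i ≤ ∑ i ∈ s ∪ d, a i + r) :
    ∏ i ∈ s, a i ≤ ∑ i ∈ s, a i + (r + #d) := by
  induction d using Finset.induction_on generalizing s with
  | empty => simpa using h
  | @insert x d hx ih =>
    have hxs : x ∉ s := disjoint_right.mp hsd (mem_insert_self x d)
    have hstep := ih (insert x s)
      (disjoint_insert_left.mpr ⟨hx, disjoint_of_subset_right (subset_insert x d) hsd⟩)
      (fun i hi => hpos i (mem_insert_of_mem hi))
      (by rwa [insert_union, ← union_insert])
    rw [prod_insert hxs, sum_insert hxs] at hstep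
    rw [card_insert_of_notMem hx, ← add_assoc r]
    exact Nat.le_add_succ_of_mul_le_add (hpos x (mem_insert_self x d)) hstep

theorem partial_product_le_partial_sum_add_general
    (n : ℕ) (a : ℕ → ℕ)
    (hpos : ∀ i ∈ Finset.Icc 1 n, 0 < a i)
    (heq : ∏ i ∈ Finset.Icc 1 n, a i = ∑ i ∈ Finset.Icc 1 n, a i) :
    ∀ k, 1 ≤ k → k ≤ n →
      ∏ i ∈ Finset.Icc 1 k, a i ≤ (∑ i ∈ Finset.Icc 1 k, a i) + (n - k) := by
  intro k _ hkn
  have hsub : Icc 1 k ⊆ Icc 1 n := Icc_subset_Icc_right hkn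
  have hcard : #(Icc 1 n \ Icc 1 k) = n - k := by
    rw [card_sdiff_of_subset hsub, Nat.card_Icc, Nat.card_Icc]
    omega
  have h := prod_le_sum_add_card_of_prod_union_le (r := 0) (Icc 1 k) (Icc 1 n \ Icc 1 k)
    disjoint_sdiff (fun i hi => hpos i (mem_sdiff.mp hi).1)
    (by rw [union_sdiff_of_subset hsub, heq, add_zero])
  rwa [hcard, zero_add] at h

/-- Fundamental inequality: for a non-increasing sequence of positive integers whose
product equals its sum, every partial product is bounded by the partial sum plus the
number of remaining terms. -/
theorem partial_product_le_partial_sum_add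
    (n : ℕ) (hn : 2 ≤ n) (a : ℕ → ℕ)
    (hpos : ∀ i ∈ Finset.Icc 1 n, 0 < a i)
    (hmono : ∀ i j, 1 ≤ i → i ≤ j → j ≤ n → a j ≤ a i)
    (heq : ∏ i ∈ Finset.Icc 1 n, a i = ∑ i ∈ Finset.Icc 1 n, a i) :
    ∀ k, 1 ≤ k → k ≤ n →
      ∏ i ∈ Finset.Icc 1 k, a i ≤ (∑ i ∈ Finset.Icc 1 k, a i) + (n - k) :=
  partial_product_le_partial_sum_add_general n a hpos heq
end

section
/- Let n ≥ 2 and let a₁ ≥ a₂ ≥ ⋯ ≥ aₙ be positive integers satisfying ∏_{i=1}^n aᵢ = ∑_{i=1}^n aᵢ, and let k⋆ be the greatest index k with a_k > 1 (such an index exists). Then for every k with 1 ≤ k < k⋆ one has the strict inequality ∏_{i=1}^k aᵢ < ∑_{i=1}^k aᵢ + (n − k). -/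
/-!
Cut `1, …, n` at `k < k⋆ ≤ n`. The entries beyond `k⋆` are all `1`, so the equation reads
`P * Q = S + T + (n - k⋆)`, where `P, S` are the product and sum of the first `k` entries and
`Q, T` those of the entries `k < i ≤ k⋆`. All these entries are at least `2`, and numbers that
are at least `2` multiply to at least their sum, so `P + T ≤ P * Q`; hence `P ≤ S + (n - k⋆)`.
-/

open Finset

theorem add_sum_le_mul_prod {ι : Type*} (s : Finset ι) (f : ι → ℕ) (hf : ∀ i ∈ s, 2 ≤ f i)
    {x : ℕ} (hx : 2 ≤ x) : x + ∑ i ∈ s, f i ≤ x * ∏ i ∈ s, f i := by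
  classical
  induction s using Finset.induction_on generalizing x with
  | empty => simp
  | insert j s hj ih =>
    have hfj : 2 ≤ f j := hf j (mem_insert_self j s)
    have hs := ih (fun i hi => hf i (mem_insert_of_mem hi)) (x := x * f j) (by nlinarith)
    rw [sum_insert hj, prod_insert hj, ← mul_assoc]
    nlinarith

theorem prod_Ioc_eq_sum_Ioc_add_of_eq_one {a : ℕ → ℕ} {m n : ℕ} (hmn : m ≤ n)
    (hone : ∀ i ∈ Ioc m n, a i = 1) (heq : ∏ i ∈ Ioc 0 n, a i = ∑ i ∈ Ioc 0 n, a i) :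
    ∏ i ∈ Ioc 0 m, a i = ∑ i ∈ Ioc 0 m, a i + (n - m) := by
  rwa [← prod_Ioc_consecutive a m.zero_le hmn, ← sum_Ioc_consecutive a m.zero_le hmn,
    prod_eq_one hone, sum_congr rfl hone, mul_one, sum_const, Nat.card_Ioc, smul_eq_mul,
    mul_one] at heq

theorem partial_product_lt_of_lt_kstar_general
    (n : ℕ) (a : ℕ → ℕ)
    (hpos : ∀ i ∈ Finset.Icc 1 n, 0 < a i)
    (hmono : ∀ i j, 1 ≤ i → i ≤ j → j ≤ n → a j ≤ a i)
    (heq : ∏ i ∈ Finset.Icc 1 n, a i = ∑ i ∈ Finset.Icc 1 n, a i)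
    (kstar : ℕ) (hk_mem : kstar ∈ Finset.Icc 1 n) (hk_gt : 1 < a kstar)
    (hk_greatest : ∀ k ∈ Finset.Icc 1 n, 1 < a k → k ≤ kstar) :
    ∀ k, 1 ≤ k → k < kstar →
      ∏ i ∈ Finset.Icc 1 k, a i < (∑ i ∈ Finset.Icc 1 k, a i) + (n - k) := by
  intro k hk hk_lt
  obtain ⟨-, hkstar_le⟩ := mem_Icc.mp hk_mem
  have hIcc : ∀ m, Icc 1 m = Ioc 0 m := fun m => Icc_add_one_left_eq_Ioc 0 m
  have htwo : ∀ i ∈ Ioc 0 kstar, 2 ≤ a i := fun i hi =>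
    hk_gt.trans_le (hmono i kstar (mem_Ioc.mp hi).1 (mem_Ioc.mp hi).2 hkstar_le)
  have hone : ∀ i ∈ Ioc kstar n, a i = 1 := fun i hi => by
    obtain ⟨hki, hin⟩ := mem_Ioc.mp hi
    have hi_pos := hpos i (mem_Icc.mpr ⟨by omega, hin⟩)
    have hi_le_one := mt (hk_greatest i (mem_Icc.mpr ⟨by omega, hin⟩)) (by omega)
    omega
  have hkstar := prod_Ioc_eq_sum_Ioc_add_of_eq_one hkstar_le hone (by rwa [← hIcc])
  rw [← prod_Ioc_consecutive a k.zero_le hk_lt.le,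
    ← sum_Ioc_consecutive a k.zero_le hk_lt.le] at hkstar
  have hhead : 2 ≤ ∏ i ∈ Ioc 0 k, a i := calc
    2 ≤ 2 ^ #(Ioc 0 k) := Nat.le_self_pow (by rw [Nat.card_Ioc]; omega) 2
    _ ≤ ∏ i ∈ Ioc 0 k, a i :=
      pow_card_le_prod _ _ _ fun i hi => htwo i (Ioc_subset_Ioc_right hk_lt.le hi)
  have hmiddle := add_sum_le_mul_prod (Ioc k kstar) a
    (fun i hi => htwo i (Ioc_subset_Ioc_left k.zero_le hi)) hhead
  have hgap : n - kstar < n - k := by omega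
  rw [hIcc]
  linarith

/-- For a solution of the product-sum equation, the strict inequality
`∏_{i=1}^k aᵢ < ∑_{i=1}^k aᵢ + (n - k)` holds for every `k` with `1 ≤ k < k⋆`,
where `k⋆` is the greatest index whose entry exceeds 1. -/
theorem partial_product_lt_of_lt_kstar
    (n : ℕ) (hn : 2 ≤ n) (a : ℕ → ℕ)
    (hpos : ∀ i ∈ Finset.Icc 1 n, 0 < a i)
    (hmono : ∀ i j, 1 ≤ i → i ≤ j → j ≤ n → a j ≤ a i)
    (heq : ∏ i ∈ Finset.Icc 1 n, a i = ∑ i ∈ Finset.Icc 1 n, a i)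
    (kstar : ℕ) (hk_mem : kstar ∈ Finset.Icc 1 n) (hk_gt : 1 < a kstar)
    (hk_greatest : ∀ k ∈ Finset.Icc 1 n, 1 < a k → k ≤ kstar) :
    ∀ k, 1 ≤ k → k < kstar →
      ∏ i ∈ Finset.Icc 1 k, a i < (∑ i ∈ Finset.Icc 1 k, a i) + (n - k) :=
  partial_product_lt_of_lt_kstar_general n a hpos hmono heq kstar hk_mem hk_gt hk_greatest
end

section
/- Let n > 2 and 1 ≤ k < n, and let a₁ ≥ a₂ ≥ ⋯ ≥ a_k be positive integers satisfying ∏_{i=1}^k aᵢ ≥ ∑_{i=1}^k aᵢ + (n − k). If a₁', …, a_k' are positive integers with a_j' ≥ a_j for every 1 ≤ j ≤ k and (a₁', …, a_k') ≠ (a₁, …, a_k), then ∏_{i=1}^k aᵢ' > ∑_{i=1}^k aᵢ' + (n − k); in particular, padding (a₁', …, a_k') with n − k ones does not give a solution of the product–sum equation of length n. -/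
/-! With `P = ∏ aᵢ` and `S = ∑ aᵢ`, the excess `P - S` is monotone in each entry as long as the
entries are positive, and raising the entry `a_j` by one raises it by `∏_{i ≠ j} aᵢ - 1`. The
hypothesis `S + (n - k) ≤ P` forces `S < P`, hence `∏_{i ≠ j} aᵢ ≥ 2` for every `j`, so raising
any entry strictly raises the excess above `n - k`. -/

open Finset

/-- Monotonicity of the excess `∏ a - ∑ a`, with both sides moved to avoid truncated subtraction. -/
theorem prod_add_sum_le_prod_add_sum_of_le {s : Finset ℕ} {a b : ℕ → ℕ}
    (ha : ∀ i ∈ s, 1 ≤ a i) (hab : ∀ i ∈ s, a i ≤ b i) :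
    ∏ i ∈ s, a i + ∑ i ∈ s, b i ≤ ∏ i ∈ s, b i + ∑ i ∈ s, a i := by
  induction s using Finset.induction with
  | empty => simp
  | @insert x t hx ih =>
    rw [prod_insert hx, prod_insert hx, sum_insert hx, sum_insert hx]
    have ih := ih (fun i hi => ha i (mem_insert_of_mem hi))
      (fun i hi => hab i (mem_insert_of_mem hi))
    have hax := ha x (mem_insert_self x t)
    have hbx := hab x (mem_insert_self x t)
    have hA : 1 ≤ ∏ i ∈ t, a i := one_le_prod' fun i hi => ha i (mem_insert_of_mem hi)
    have hAB : ∏ i ∈ t, a i ≤ ∏ i ∈ t, b i :=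
      prod_le_prod' fun i hi => hab i (mem_insert_of_mem hi)
    nlinarith

theorem two_le_prod_erase_of_sum_lt_prod {s : Finset ℕ} {a : ℕ → ℕ} {j : ℕ} (hj : j ∈ s)
    (ha : ∀ i ∈ s, 1 ≤ a i) (hlt : ∑ i ∈ s, a i < ∏ i ∈ s, a i) :
    2 ≤ ∏ i ∈ s.erase j, a i := by
  by_contra! h
  have hone : ∏ i ∈ s.erase j, a i = 1 :=
    le_antisymm (by omega) (one_le_prod' fun i hi => ha i (mem_of_mem_erase hi))
  rw [← mul_prod_erase s a hj, hone, mul_one] at hlt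
  exact hlt.not_ge (single_le_sum (fun i _ => Nat.zero_le (a i)) hj)

theorem prod_add_sum_lt_prod_add_sum_of_lt {s : Finset ℕ} {a b : ℕ → ℕ} {j : ℕ} (hj : j ∈ s)
    (ha : ∀ i ∈ s, 1 ≤ a i) (hab : ∀ i ∈ s, a i ≤ b i) (hjlt : a j < b j)
    (hrest : 2 ≤ ∏ i ∈ s.erase j, a i) :
    ∏ i ∈ s, a i + ∑ i ∈ s, b i < ∏ i ∈ s, b i + ∑ i ∈ s, a i := by
  rw [← mul_prod_erase s a hj, ← mul_prod_erase s b hj, ← add_sum_erase s a hj,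
    ← add_sum_erase s b hj]
  have hrest_mono := prod_add_sum_le_prod_add_sum_of_le (s := s.erase j)
    (fun i hi => ha i (mem_of_mem_erase hi)) (fun i hi => hab i (mem_of_mem_erase hi))
  have hAB : ∏ i ∈ s.erase j, a i ≤ ∏ i ∈ s.erase j, b i :=
    prod_le_prod' fun i hi => hab i (mem_of_mem_erase hi)
  nlinarith

theorem increased_sequence_violates_inequality_general
    (n k : ℕ) (hkn : k < n) (a a' : ℕ → ℕ)
    (hpos : ∀ i ∈ Finset.Icc 1 k, 0 < a i)
    (hineq : (∑ i ∈ Finset.Icc 1 k, a i) + (n - k) ≤ ∏ i ∈ Finset.Icc 1 k, a i)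
    (hge : ∀ j ∈ Finset.Icc 1 k, a j ≤ a' j)
    (hne : ∃ j ∈ Finset.Icc 1 k, a' j ≠ a j) :
    ∏ i ∈ Finset.Icc 1 k, a' i > (∑ i ∈ Finset.Icc 1 k, a' i) + (n - k) := by
  obtain ⟨j, hj, hja⟩ := hne
  have hsum_lt : ∑ i ∈ Icc 1 k, a i < ∏ i ∈ Icc 1 k, a i := by omega
  have hexcess := prod_add_sum_lt_prod_add_sum_of_lt hj hpos hge
    (lt_of_le_of_ne (hge j hj) hja.symm) (two_le_prod_erase_of_sum_lt_prod hj hpos hsum_lt)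
  omega

/-- If a partial sequence already satisfies `∏ ≥ ∑ + (n - k)`, then any entrywise-larger
sequence (differing in at least one entry) satisfies the strict inequality
`∏ > ∑ + (n - k)`; in particular its padding with ones is not a solution of the
product-sum equation of length `n`. -/
theorem increased_sequence_violates_inequality
    (n k : ℕ) (hn : 2 < n) (hk1 : 1 ≤ k) (hkn : k < n) (a a' : ℕ → ℕ)
    (hpos : ∀ i ∈ Finset.Icc 1 k, 0 < a i)
    (hmono : ∀ i j, 1 ≤ i → i ≤ j → j ≤ k → a j ≤ a i)
    (hineq : (∑ i ∈ Finset.Icc 1 k, a i) + (n - k) ≤ ∏ i ∈ Finset.Icc 1 k, a i)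
    (hpos' : ∀ i ∈ Finset.Icc 1 k, 0 < a' i)
    (hge : ∀ j ∈ Finset.Icc 1 k, a j ≤ a' j)
    (hne : ∃ j ∈ Finset.Icc 1 k, a' j ≠ a j) :
    ∏ i ∈ Finset.Icc 1 k, a' i > (∑ i ∈ Finset.Icc 1 k, a' i) + (n - k) :=
  increased_sequence_violates_inequality_general n k hkn a a' hpos hineq hge hne
end

section
/- Let n ≥ 2 and let a₁ ≥ a₂ ≥ ⋯ ≥ aₙ be positive integers satisfying ∏_{i=1}^n aᵢ = ∑_{i=1}^n aᵢ. Then aᵢ ≤ n for every 1 ≤ i ≤ n. -/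
/-!
Fix an entry `x` and let `P` and `S` be the product and the sum of the other `n - 1` entries, so
that `x * P = x + S`. Since all entries are positive, `S + 1 ≤ P + (n - 1)`, hence
`x * (P - 1) = S ≤ (P - 1) + (n - 1)`, i.e. `(x - 1) * (P - 1) ≤ n - 1`; and `P ≥ 2` because `S > 0`.
-/

open Finset

theorem Finset.sum_add_one_le_prod_add_card {ι : Type*} (s : Finset ι) (f : ι → ℕ)
    (hf : ∀ i ∈ s, 0 < f i) : ∑ i ∈ s, f i + 1 ≤ ∏ i ∈ s, f i + #s := by
  classical
  induction s using Finset.induction_on with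
  | empty => simp
  | insert j t hj ih =>
    rw [sum_insert hj, prod_insert hj, card_insert_of_notMem hj]
    have hfj : 1 ≤ f j := hf j (mem_insert_self j t)
    have hft : ∀ i ∈ t, 0 < f i := fun i hi => hf i (mem_insert_of_mem hi)
    have hP : 1 ≤ ∏ i ∈ t, f i := one_le_prod' hft
    nlinarith [ih hft]

theorem Nat.le_add_one_of_mul_eq_add {x P S m : ℕ} (h : x * P = x + S) (hS : 0 < S)
    (hSP : S + 1 ≤ P + m) : x ≤ m + 1 := by
  obtain _ | Q := P
  · omega
  have hxQ : x * Q = S := by linarith [mul_add_one x Q]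
  have hQ : 0 < Q := Nat.pos_of_ne_zero (by rintro rfl; omega)
  by_contra! hx
  nlinarith

theorem Finset.le_card_of_prod_eq_sum {ι : Type*} [DecidableEq ι] {s : Finset ι} {f : ι → ℕ}
    (hf : ∀ i ∈ s, 0 < f i) (hs : 2 ≤ #s) (h : ∏ i ∈ s, f i = ∑ i ∈ s, f i) {i : ι}
    (hi : i ∈ s) : f i ≤ #s := by
  have hf' : ∀ j ∈ s.erase i, 0 < f j := fun j hj => hf j (mem_of_mem_erase hj)
  have hcard : #(s.erase i) + 1 = #s := card_erase_add_one hi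
  have hS : #(s.erase i) ≤ ∑ j ∈ s.erase i, f j := by simpa using card_nsmul_le_sum _ f 1 hf'
  rw [← mul_prod_erase s f hi, ← add_sum_erase s f hi] at h
  have := Nat.le_add_one_of_mul_eq_add h (by omega)
    (sum_add_one_le_prod_add_card (s.erase i) f hf')
  omega

theorem solution_entries_le_general
    (n : ℕ) (hn : 2 ≤ n) (a : ℕ → ℕ)
    (hpos : ∀ i ∈ Finset.Icc 1 n, 0 < a i)
    (heq : ∏ i ∈ Finset.Icc 1 n, a i = ∑ i ∈ Finset.Icc 1 n, a i) :
    ∀ i, 1 ≤ i → i ≤ n → a i ≤ n := by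
  intro i hi hin
  have hcard : #(Icc 1 n) = n := by simp
  simpa [hcard] using
    le_card_of_prod_eq_sum hpos (hcard.symm ▸ hn) heq (mem_Icc.mpr ⟨hi, hin⟩)

/-- Every entry of a solution of the product-sum equation of length `n` is at most `n`. -/
theorem solution_entries_le
    (n : ℕ) (hn : 2 ≤ n) (a : ℕ → ℕ)
    (hpos : ∀ i ∈ Finset.Icc 1 n, 0 < a i)
    (hmono : ∀ i j, 1 ≤ i → i ≤ j → j ≤ n → a j ≤ a i)
    (heq : ∏ i ∈ Finset.Icc 1 n, a i = ∑ i ∈ Finset.Icc 1 n, a i) :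
    ∀ i, 1 ≤ i → i ≤ n → a i ≤ n :=
  solution_entries_le_general n hn a hpos heq
end

section
/- Let n ≥ 2 and let a₁ ≥ a₂ ≥ ⋯ ≥ aₙ be positive integers satisfying ∏_{i=1}^n aᵢ = ∑_{i=1}^n aᵢ. If a is not the basic solution (that is, a is not the sequence with a₁ = n, a₂ = 2 and a₃ = ⋯ = aₙ = 1), then aᵢ < n for every 1 ≤ i ≤ n. -/
/-!
Suppose `a₁ ≥ n`, and let `P` and `S` be the product and the sum of `a₂, …, aₙ`, so that
`a₁ P = a₁ + S`. Since `xy ≥ x + y - 1` for positive integers, `S ≤ P + n - 2`; together with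
`a₁ (P - 1) = S > 0` and `a₁ ≥ n` this forces `P = 2` and `a₁ = n`. A product of positive
integers equal to `2` has its largest factor `a₂` equal to `2` and all other factors equal to
`1`, so `a` is the basic solution.
-/

open Finset

namespace Finset

theorem sum_add_one_le_prod_add_card_s6 {ι : Type*} (s : Finset ι) {f : ι → ℕ}
    (hf : ∀ i ∈ s, 1 ≤ f i) : ∑ i ∈ s, f i + 1 ≤ ∏ i ∈ s, f i + #s := by
  classical
  induction s using Finset.induction_on with
  | empty => simp
  | insert x s hx ih =>
    rw [sum_insert hx, prod_insert hx, card_insert_of_notMem hx]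
    have hfx : 1 ≤ f x := hf x (mem_insert_self x s)
    have hprod : 1 ≤ ∏ i ∈ s, f i := one_le_prod' fun i hi ↦ hf i (mem_insert_of_mem hi)
    have ih := ih fun i hi ↦ hf i (mem_insert_of_mem hi)
    nlinarith

theorem eq_two_and_eq_one_of_prod_eq_two {ι : Type*} [DecidableEq ι] {s : Finset ι}
    {f : ι → ℕ} {j : ι} (hj : j ∈ s) (hf : ∀ i ∈ s, 1 ≤ f i) (hmax : ∀ i ∈ s, f i ≤ f j)
    (h : ∏ i ∈ s, f i = 2) : f j = 2 ∧ ∀ i ∈ s.erase j, f i = 1 := by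
  have hfj : f j = 2 := by
    have hle : f j ≤ 2 := h ▸ Nat.le_of_dvd (h ▸ two_pos) (dvd_prod_of_mem f hj)
    have hne : f j ≠ 1 := by
      intro h1
      have hall : ∀ i ∈ s, f i = 1 := fun i hi ↦ le_antisymm (h1 ▸ hmax i hi) (hf i hi)
      simp [prod_congr rfl hall] at h
    have := hf j hj
    omega
  refine ⟨hfj, (prod_eq_one_iff_of_one_le' fun i hi ↦ hf i (mem_of_mem_erase hi)).mp ?_⟩
  rw [← mul_prod_erase s f hj, hfj] at h
  omega

end Finset

theorem Nat.eq_two_of_mul_eq_add {x P S k : ℕ} (hk : 1 ≤ k) (hx : k + 1 ≤ x)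
    (hS : 0 < S) (h : x * P = x + S) (hSP : S + 1 ≤ P + k) : P = 2 ∧ x = k + 1 := by
  have hP : 2 ≤ P := by
    by_contra! hP
    interval_cases P <;> omega
  have hP2 : P ≤ 2 := by nlinarith
  obtain rfl : P = 2 := le_antisymm hP2 hP
  omega

/-- Every entry of a non-basic solution of the product-sum equation of length `n`
is strictly less than `n`. The basic solution is `a₁ = n, a₂ = 2, a₃ = ⋯ = aₙ = 1`. -/
theorem nonbasic_solution_entries_lt
    (n : ℕ) (hn : 2 ≤ n) (a : ℕ → ℕ)
    (hpos : ∀ i ∈ Finset.Icc 1 n, 0 < a i)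
    (hmono : ∀ i j, 1 ≤ i → i ≤ j → j ≤ n → a j ≤ a i)
    (heq : ∏ i ∈ Finset.Icc 1 n, a i = ∑ i ∈ Finset.Icc 1 n, a i)
    (hnotbasic : ¬ (a 1 = n ∧ a 2 = 2 ∧ ∀ i, 3 ≤ i → i ≤ n → a i = 1)) :
    ∀ i, 1 ≤ i → i ≤ n → a i < n := by
  intro i hi1 hin
  by_contra! hge
  have ha1 : n ≤ a 1 := hge.trans (hmono 1 i le_rfl hi1 hin)
  have htail : ∀ j ∈ Icc 2 n, 1 ≤ a j := fun j hj ↦ hpos j (by simp at hj ⊢; omega)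
  have hsplit : a 1 * ∏ j ∈ Icc 2 n, a j = a 1 + ∑ j ∈ Icc 2 n, a j := by
    rwa [← insert_Icc_add_one_left_eq_Icc (by omega : 1 ≤ n), prod_insert (by simp),
      sum_insert (by simp)] at heq
  have hbound := sum_add_one_le_prod_add_card_s6 (Icc 2 n) htail
  have hS : 0 < ∑ j ∈ Icc 2 n, a j := sum_pos htail (nonempty_Icc.mpr hn)
  rw [Nat.card_Icc] at hbound
  obtain ⟨hP, ha1n⟩ := Nat.eq_two_of_mul_eq_add (k := n - 1) (by omega) (by omega)
    hS hsplit (by omega)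
  obtain ⟨ha2, hrest⟩ := eq_two_and_eq_one_of_prod_eq_two (left_mem_Icc.mpr hn) htail
    (fun j hj ↦ hmono 2 j one_le_two (mem_Icc.mp hj).1 (mem_Icc.mp hj).2) hP
  exact hnotbasic ⟨by omega, ha2, fun j hj3 hjn ↦ hrest j (by simp; omega)⟩
end

section
/- Let n ≥ 2 and 1 ≤ i ≤ n, and suppose a₁ ≥ a₂ ≥ ⋯ ≥ a_i are integers with a_i > 1 satisfying the strict inequality ∏_{j=1}^i a_j < ∑_{j=1}^i a_j + (n − i). Set n' := ∏_{j=1}^i a_j − ∑_{j=1}^i a_j + i. Then i ≤ n' < n, and the sequence (a₁, a₂, …, a_i, 1, …, 1) of length n' (padded with n' − i ones) satisfies ∏_{j=1}^{n'} a_j = ∑_{j=1}^{n'} a_j. -/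
/-!
All of `a₁, …, aᵢ` are at least `aᵢ ≥ 2`, so their sum is at most their product and
`n' = ∏ - ∑ + i ≥ i`. Padding with `n' - i` ones leaves the product unchanged and raises the sum
by exactly `∏ - ∑`; the bound `n' < n` is the feasibility inequality rearranged.
-/

open Finset

theorem Finset.sum_le_prod_of_two_le {ι : Type*} (s : Finset ι) (f : ι → ℕ)
    (hf : ∀ j ∈ s, 2 ≤ f j) : ∑ j ∈ s, f j ≤ ∏ j ∈ s, f j := by
  induction s using Finset.cons_induction with
  | empty => simp
  | cons x s _ ih =>
    rw [sum_cons, prod_cons]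
    have hfx : 2 ≤ f x := hf x (mem_cons_self x s)
    have hS : ∑ j ∈ s, f j ≤ ∏ j ∈ s, f j := ih fun j hj => hf j (mem_cons_of_mem hj)
    rcases s.eq_empty_or_nonempty with rfl | hne
    · simp
    have hP : 2 ≤ ∏ j ∈ s, f j := by
      obtain ⟨j, hj⟩ := hne
      calc 2 ≤ f j := hf j (mem_cons_of_mem hj)
        _ ≤ ∏ j ∈ s, f j :=
          single_le_prod' (fun k hk => by have := hf k (mem_cons_of_mem hk); omega) hj
    -- `P + x ≤ P * x` for `P, x ≥ 2`
    nlinarith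

theorem prod_Icc_pad_ones (a : ℕ → ℕ) {i m : ℕ} (h : i ≤ m) :
    ∏ j ∈ Icc 1 m, (if j ≤ i then a j else 1) = ∏ j ∈ Icc 1 i, a j := by
  rw [prod_ite, prod_const_one, mul_one]
  congr 1
  ext j
  simp only [mem_filter, mem_Icc]
  omega

theorem sum_Icc_pad_ones (a : ℕ → ℕ) {i m : ℕ} (h : i ≤ m) :
    ∑ j ∈ Icc 1 m, (if j ≤ i then a j else 1) = ∑ j ∈ Icc 1 i, a j + (m - i) := by
  rw [sum_ite, sum_const, smul_eq_mul, mul_one]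
  have hle : (Icc 1 m).filter (· ≤ i) = Icc 1 i := by
    ext j; simp only [mem_filter, mem_Icc]; omega
  have hgt : (Icc 1 m).filter (fun j => ¬ j ≤ i) = Icc (i + 1) m := by
    ext j; simp only [mem_filter, mem_Icc]; omega
  rw [hle, hgt, Nat.card_Icc]
  omega

theorem feasible_prefix_gives_shorter_solution_general
    (n i : ℕ) (a : ℕ → ℕ)
    (hmono : ∀ j l, 1 ≤ j → j ≤ l → l ≤ i → a l ≤ a j)
    (hlast : 1 < a i)
    (hineq : ∏ j ∈ Finset.Icc 1 i, a j < (∑ j ∈ Finset.Icc 1 i, a j) + (n - i)) :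
    i ≤ (∏ j ∈ Finset.Icc 1 i, a j) - (∑ j ∈ Finset.Icc 1 i, a j) + i ∧
    (∏ j ∈ Finset.Icc 1 i, a j) - (∑ j ∈ Finset.Icc 1 i, a j) + i < n ∧
    (∏ j ∈ Finset.Icc 1 ((∏ j ∈ Finset.Icc 1 i, a j) - (∑ j ∈ Finset.Icc 1 i, a j) + i),
        (if j ≤ i then a j else 1)) =
      ∑ j ∈ Finset.Icc 1 ((∏ j ∈ Finset.Icc 1 i, a j) - (∑ j ∈ Finset.Icc 1 i, a j) + i),
        (if j ≤ i then a j else 1) := by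
  have htwo : ∀ j ∈ Icc 1 i, 2 ≤ a j := fun j hj =>
    hlast.trans_le (hmono j i (mem_Icc.mp hj).1 (mem_Icc.mp hj).2 le_rfl)
  have hsum_le := sum_le_prod_of_two_le _ a htwo
  refine ⟨by omega, by omega, ?_⟩
  rw [prod_Icc_pad_ones a (by omega), sum_Icc_pad_ones a (by omega)]
  omega

/-- A strict feasibility inequality for a partial sequence yields a genuine solution of
the product-sum equation of some shorter length `n' = ∏ - ∑ + i` with `i ≤ n' < n`,
obtained by padding with ones. -/
theorem feasible_prefix_gives_shorter_solution
    (n i : ℕ) (hn : 2 ≤ n) (hi1 : 1 ≤ i) (hin : i ≤ n) (a : ℕ → ℕ)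
    (hmono : ∀ j l, 1 ≤ j → j ≤ l → l ≤ i → a l ≤ a j)
    (hlast : 1 < a i)
    (hineq : ∏ j ∈ Finset.Icc 1 i, a j < (∑ j ∈ Finset.Icc 1 i, a j) + (n - i)) :
    i ≤ (∏ j ∈ Finset.Icc 1 i, a j) - (∑ j ∈ Finset.Icc 1 i, a j) + i ∧
    (∏ j ∈ Finset.Icc 1 i, a j) - (∑ j ∈ Finset.Icc 1 i, a j) + i < n ∧
    (∏ j ∈ Finset.Icc 1 ((∏ j ∈ Finset.Icc 1 i, a j) - (∑ j ∈ Finset.Icc 1 i, a j) + i),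
        (if j ≤ i then a j else 1)) =
      ∑ j ∈ Finset.Icc 1 ((∏ j ∈ Finset.Icc 1 i, a j) - (∑ j ∈ Finset.Icc 1 i, a j) + i),
        (if j ≤ i then a j else 1) :=
  feasible_prefix_gives_shorter_solution_general n i a hmono hlast hineq
end

section
/- Let n ≥ 3 and let a₁ ≥ a₂ ≥ ⋯ ≥ aₙ be positive integers satisfying ∏_{i=1}^n aᵢ ≤ ∑_{i=1}^n aᵢ. Let m ≥ 2 be an integer and let k ≥ 1 be the number of indices i with aᵢ ≥ m (assume there is at least one such index). Then k < log n / log m + 1, where logarithms are real logarithms. -/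
/-!
Let `M` be the largest entry. The `k` entries that are at least `m` give
`∏ aᵢ ≥ M * m ^ (k - 1)`, while `∑ aᵢ ≤ k * M + (n - k) * (m - 1)`. If some entry is below `m`,
the right-hand side is `< n * M`, whence `m ^ (k - 1) < n`; otherwise `k = n` and
`m ^ (n - 1) ≤ n`, which fails for `n ≥ 3`. Taking logarithms gives the bound.
-/

open Finset

theorem Nat.lt_pow_sub_one {m n : ℕ} (hm : 2 ≤ m) (hn : 3 ≤ n) : n < m ^ (n - 1) := by
  obtain ⟨j, rfl⟩ : ∃ j, n = j + 3 := ⟨n - 3, by omega⟩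
  have hj : j < m ^ j := Nat.lt_pow_self (by omega)
  calc j + 3 < (j + 1) * (2 * 2) := by omega
    _ ≤ m ^ j * (m * m) := by gcongr; omega
    _ = m ^ (j + 3 - 1) := by rw [show j + 3 - 1 = j + 2 by omega]; ring

namespace Finset

variable {ι : Type*} (s : Finset ι) (f : ι → ℕ) {m : ℕ}

theorem mul_pow_card_filter_le_sub_one_le_prod (hpos : ∀ i ∈ s, 0 < f i) {i₀ : ι}
    (hi₀ : i₀ ∈ s) (hm : m ≤ f i₀) :
    f i₀ * m ^ (#{i ∈ s | m ≤ f i} - 1) ≤ ∏ i ∈ s, f i := by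
  classical
  have hi₀T : i₀ ∈ s.filter (m ≤ f ·) := mem_filter.2 ⟨hi₀, hm⟩
  have hT :
      m ^ (#{i ∈ s | m ≤ f i} - 1) ≤ ∏ i ∈ (s.filter (m ≤ f ·)).erase i₀, f i := by
    rw [← card_erase_of_mem hi₀T]
    exact pow_card_le_prod _ _ _ fun i hi => (mem_filter.1 (mem_of_mem_erase hi)).2
  have hN : 1 ≤ ∏ i ∈ s with ¬ m ≤ f i, f i :=
    one_le_prod' fun i hi => hpos i (mem_filter.1 hi).1
  calc f i₀ * m ^ (#{i ∈ s | m ≤ f i} - 1)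
      ≤ f i₀ * ∏ i ∈ (s.filter (m ≤ f ·)).erase i₀, f i := Nat.mul_le_mul_left _ hT
    _ = ∏ i ∈ s with m ≤ f i, f i := mul_prod_erase _ _ hi₀T
    _ ≤ (∏ i ∈ s with m ≤ f i, f i) * ∏ i ∈ s with ¬ m ≤ f i, f i :=
        Nat.le_mul_of_pos_right _ hN
    _ = ∏ i ∈ s, f i := prod_filter_mul_prod_filter_not _ _ _

theorem sum_le_card_filter_le_mul_add {M : ℕ} (hM : ∀ i ∈ s, f i ≤ M) :
    ∑ i ∈ s, f i ≤ #{i ∈ s | m ≤ f i} * M + #{i ∈ s | ¬ m ≤ f i} * (m - 1) := by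
  rw [← sum_filter_add_sum_filter_not s (m ≤ f ·)]
  gcongr
  · simpa using sum_le_card_nsmul _ _ _ fun i hi => hM i (mem_filter.1 hi).1
  · simpa using sum_le_card_nsmul _ _ (m - 1) fun i hi => by
      have := (mem_filter.1 hi).2
      omega

theorem pow_card_filter_le_sub_one_lt_card_of_prod_le_sum (hm : 2 ≤ m) (hs : 3 ≤ #s)
    (hpos : ∀ i ∈ s, 0 < f i) (hle : ∏ i ∈ s, f i ≤ ∑ i ∈ s, f i)
    (hk : {i ∈ s | m ≤ f i}.Nonempty) :
    m ^ (#{i ∈ s | m ≤ f i} - 1) < #s := by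
  obtain ⟨i₀, hi₀, hi₀max⟩ := s.exists_mem_eq_sup (hk.mono (filter_subset _ _)) f
  obtain ⟨j, hj⟩ := hk
  have hmM : m ≤ s.sup f := (mem_filter.1 hj).2.trans (le_sup (mem_filter.1 hj).1)
  rw [hi₀max] at hmM
  have hbudget : f i₀ * m ^ (#{i ∈ s | m ≤ f i} - 1)
      ≤ #{i ∈ s | m ≤ f i} * f i₀ + #{i ∈ s | ¬ m ≤ f i} * (m - 1) :=
    (mul_pow_card_filter_le_sub_one_le_prod s f hpos hi₀ hmM).trans <| hle.trans <|
      sum_le_card_filter_le_mul_add s f fun i hi => hi₀max ▸ le_sup hi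
  have hcard := card_filter_add_card_filter_not (s := s) (m ≤ f ·)
  rcases Nat.eq_zero_or_pos #{i ∈ s | ¬ m ≤ f i} with hN | hN
  · rw [hN, add_zero] at hcard
    rw [hN, zero_mul, add_zero, hcard, mul_comm #s] at hbudget
    exact absurd (Nat.le_of_mul_le_mul_left hbudget (by omega))
      (Nat.lt_pow_sub_one hm hs).not_ge
  · refine Nat.lt_of_mul_lt_mul_left (a := f i₀) (hbudget.trans_lt ?_)
    calc #{i ∈ s | m ≤ f i} * f i₀ + #{i ∈ s | ¬ m ≤ f i} * (m - 1)
        < #{i ∈ s | m ≤ f i} * f i₀ + #{i ∈ s | ¬ m ≤ f i} * f i₀ := by gcongr; omega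
      _ = f i₀ * #s := by rw [← add_mul, hcard, mul_comm]

end Finset

theorem Real.natCast_lt_log_div_log_add_one {m n k : ℕ} (hm : 1 < m) (h : m ^ (k - 1) < n) :
    (k : ℝ) < Real.log n / Real.log m + 1 := by
  have hm' : (1 : ℝ) < m := by exact_mod_cast hm
  have hlog : ((k - 1 : ℕ) : ℝ) < Real.logb m n := by
    rw [Real.lt_logb_iff_rpow_lt hm' (by exact_mod_cast pos_of_gt h), Real.rpow_natCast]
    exact_mod_cast h
  have hk : (k : ℝ) ≤ ((k - 1 : ℕ) : ℝ) + 1 := by exact_mod_cast (by omega : k ≤ k - 1 + 1)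
  rw [Real.logb] at hlog
  linarith

theorem card_ge_m_lt_log_bound_general
    (n m : ℕ) (hn : 3 ≤ n) (hm : 2 ≤ m) (a : ℕ → ℕ)
    (hpos : ∀ i ∈ Finset.Icc 1 n, 0 < a i)
    (hle : ∏ i ∈ Finset.Icc 1 n, a i ≤ ∑ i ∈ Finset.Icc 1 n, a i)
    (k : ℕ) (hk : k = ((Finset.Icc 1 n).filter (fun i => m ≤ a i)).card)
    (hk1 : 1 ≤ k) :
    (k : ℝ) < Real.log n / Real.log m + 1 := by
  have hcard : (Finset.Icc 1 n).card = n := by simp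
  have hT : ((Finset.Icc 1 n).filter (fun i => m ≤ a i)).Nonempty := by
    rw [← Finset.card_pos, ← hk]
    omega
  have hkey := (Finset.Icc 1 n).pow_card_filter_le_sub_one_lt_card_of_prod_le_sum a hm
    (by omega) hpos hle hT
  rw [← hk, hcard] at hkey
  exact Real.natCast_lt_log_div_log_add_one (by omega) hkey

/-- If a non-increasing sequence of positive integers satisfies `∏ aᵢ ≤ ∑ aᵢ`, then
the number `k` of entries that are at least `m` (assumed positive) satisfies
`k < log n / log m + 1`. -/
theorem card_ge_m_lt_log_bound
    (n m : ℕ) (hn : 3 ≤ n) (hm : 2 ≤ m) (a : ℕ → ℕ)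
    (hpos : ∀ i ∈ Finset.Icc 1 n, 0 < a i)
    (hmono : ∀ i j, 1 ≤ i → i ≤ j → j ≤ n → a j ≤ a i)
    (hle : ∏ i ∈ Finset.Icc 1 n, a i ≤ ∑ i ∈ Finset.Icc 1 n, a i)
    (k : ℕ) (hk : k = ((Finset.Icc 1 n).filter (fun i => m ≤ a i)).card)
    (hk1 : 1 ≤ k) :
    (k : ℝ) < Real.log n / Real.log m + 1 :=
  card_ge_m_lt_log_bound_general n m hn hm a hpos hle k hk hk1
end

section
/- Let n ≥ 3 and suppose 2n − 1 = a·b with integers a ≥ b ≥ 2 (so that a and b are both odd, since 2n − 1 is odd). Then the sequence of length n given by a₁ = (a+1)/2, a₂ = (b+1)/2, a₃ = 2 and a₄ = ⋯ = aₙ = 1 satisfies ∏_{i=1}^n aᵢ = ∑_{i=1}^n aᵢ; in particular, if 2n − 1 is composite, the product–sum equation of length n has a solution other than the basic solution. -/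
/-!
Write `a = 2x + 1` and `b = 2y + 1` (both odd, as `a * b = 2n - 1`). The product of the sequence
is `2(x + 1)(y + 1) = 2xy + 2x + 2y + 2`, while its sum is `(x + 1) + (y + 1) + 2 + (n - 3)`;
these agree because `(2x + 1)(2y + 1) = 2n - 1` says exactly that `n = 2xy + x + y + 1`.
-/

section ThreeThenOnes

variable {M : Type*} {n : ℕ} (x y z : M)

theorem Finset.Icc_one_eq_insert_insert_insert_Icc_four (hn : 3 ≤ n) :
    Finset.Icc 1 n = insert 1 (insert 2 (insert 3 (Finset.Icc 4 n))) := by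
  ext i
  simp only [Finset.mem_Icc, Finset.mem_insert]
  omega

theorem ite_three_eq_one_of_mem_Icc_four [One M] {i : ℕ} (hi : i ∈ Finset.Icc 4 n) :
    (if i = 1 then x else if i = 2 then y else if i = 3 then z else 1) = 1 := by
  rw [Finset.mem_Icc] at hi
  rw [if_neg (by omega), if_neg (by omega), if_neg (by omega)]

theorem prod_Icc_one_ite_three [CommMonoid M] (hn : 3 ≤ n) :
    ∏ i ∈ Finset.Icc 1 n, (if i = 1 then x else if i = 2 then y else if i = 3 then z else 1) =
      x * (y * z) := by
  rw [Finset.Icc_one_eq_insert_insert_insert_Icc_four hn]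
  simp [Finset.prod_eq_one fun i hi => ite_three_eq_one_of_mem_Icc_four x y z hi]

theorem sum_Icc_one_ite_three [AddCommMonoidWithOne M] (hn : 3 ≤ n) :
    ∑ i ∈ Finset.Icc 1 n, (if i = 1 then x else if i = 2 then y else if i = 3 then z else 1) =
      x + (y + (z + (n - 3 : ℕ))) := by
  rw [Finset.Icc_one_eq_insert_insert_insert_Icc_four hn]
  simp [Finset.sum_congr rfl fun i hi => ite_three_eq_one_of_mem_Icc_four x y z hi]

end ThreeThenOnes

theorem half_succ_mul_half_succ_mul_two_of_mul_eq {n a b : ℕ} (hn : 1 ≤ n)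
    (hab : a * b = 2 * n - 1) :
    (a + 1) / 2 * ((b + 1) / 2 * 2) + 1 = (a + 1) / 2 + ((b + 1) / 2 + n) := by
  obtain ⟨⟨x, rfl⟩, ⟨y, rfl⟩⟩ : Odd a ∧ Odd b := Nat.odd_mul.mp (hab ▸ ⟨n - 1, by omega⟩)
  rw [show (2 * x + 1 + 1) / 2 = x + 1 by omega, show (2 * y + 1 + 1) / 2 = y + 1 by omega]
  have hn' : n = 2 * (x * y) + x + y + 1 := by
    have : (2 * x + 1) * (2 * y + 1) = 4 * (x * y) + 2 * x + 2 * y + 1 := by ring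
    omega
  subst hn'
  ring

theorem reble_construction_general
    (n a b : ℕ) (hn : 3 ≤ n) (hab : a * b = 2 * n - 1) :
    ∏ i ∈ Finset.Icc 1 n,
        (if i = 1 then (a + 1) / 2 else if i = 2 then (b + 1) / 2 else
          if i = 3 then 2 else 1) =
      ∑ i ∈ Finset.Icc 1 n,
        (if i = 1 then (a + 1) / 2 else if i = 2 then (b + 1) / 2 else
          if i = 3 then 2 else 1) := by
  rw [prod_Icc_one_ite_three _ _ _ hn, sum_Icc_one_ite_three _ _ _ hn, Nat.cast_id]
  have hprod_sum := half_succ_mul_half_succ_mul_two_of_mul_eq (by omega) hab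
  omega

/-- Reble's construction: if `2n - 1 = a * b` with `a ≥ b ≥ 2`, then the sequence
`((a+1)/2, (b+1)/2, 2, 1, …, 1)` of length `n` is a solution of the product-sum
equation. -/
theorem reble_construction
    (n a b : ℕ) (hn : 3 ≤ n) (hb : 2 ≤ b) (hba : b ≤ a) (hab : a * b = 2 * n - 1) :
    ∏ i ∈ Finset.Icc 1 n,
        (if i = 1 then (a + 1) / 2 else if i = 2 then (b + 1) / 2 else
          if i = 3 then 2 else 1) =
      ∑ i ∈ Finset.Icc 1 n,
        (if i = 1 then (a + 1) / 2 else if i = 2 then (b + 1) / 2 else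
          if i = 3 then 2 else 1) :=
  reble_construction_general n a b hn hab
end
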